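/- Let G be a closed abelian subgroup of Isom(ℝ^k) and let G_∞ be the set of all limits, as λ_i → 0, of dilation-conjugates D_{λ_i} g_i D_{λ_i}^{-1} with g_i ∈ G. Then G_∞ is a closed subgroup of Isom(ℝ^k) containing the isotropy subgroup Iso₀G, and if G does not satisfy property (P) then Iso₀G is a proper subgroup of Iso₀G_∞. -/

import Mathlib

open Filter

/-- `ℝ^k` with the Euclidean metric. -/
noncomputable abbrev E (k : ℕ) := EuclideanSpace ℝ (Fin k)

/-- The isometry `x ↦ A x + v` of `ℝ^k`, i.e. the element `(A, v)` of
`Isom(ℝ^k) = ℝ^k ⋊ O(k)`. -/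
noncomputable def aff {k : ℕ} (A : E k ≃ₗᵢ[ℝ] E k) (v : E k) : E k ≃ᵢ E k :=
  A.toIsometryEquiv.trans (IsometryEquiv.addLeft v)

/-- Topology of pointwise convergence on the isometry group of `ℝ^k`
(equivalently, of uniform convergence on compact sets). -/
noncomputable instance {k : ℕ} : TopologicalSpace (E k ≃ᵢ E k) :=
  TopologicalSpace.induced (fun g => (g : E k → E k)) Pi.topologicalSpace

/-- The blow-down limit set `G_∞` of `G ≤ Isom(ℝ^k)`: all limits, as `λᵢ → 0⁺`, of
dilation-conjugates `D_{λᵢ} gᵢ D_{λᵢ}^{-1}` of elements `gᵢ = (Aᵢ, vᵢ) ∈ G` (the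
conjugate of `(A, v)` by `D_λ` being `(A, λ v)`). -/
def Ginf {k : ℕ} (G : Subgroup (E k ≃ᵢ E k)) : Set (E k ≃ᵢ E k) :=
  {h | ∃ (s : ℕ → ℝ) (As : ℕ → (E k ≃ₗᵢ[ℝ] E k)) (vs : ℕ → E k),
    (∀ n, aff (As n) (vs n) ∈ G) ∧ (∀ n, 0 < s n) ∧
    Tendsto s atTop (nhds 0) ∧
    Tendsto (fun n => aff (As n) (s n • vs n)) atTop (nhds h)}

/-!
Conjugating `g = (A, v)` by the dilation `D_s` gives `(A, s v)`, which is jointly continuous in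
`(s, g)` down to `s = 0`, where it is the linear part `(A, 0)`. So `G_∞` is the set of cluster
points of this map along `s → 0⁺`, `g ∈ G`, hence closed (the isometry group is first
countable), and the same continuity shows that `G_∞` is closed under inverses, contains the
linear parts of elements of `G`, and is stable under multiplication on either side by linear
parts of its own elements. Group algebra then reduces closure under products to the sum of two
translations `(1, d₁), (1, d₂) ∈ G_∞`.

As `G` is abelian, `d = lim sₙ vₙ` is fixed by the linear part `Aₙ` of every `gₙ = (Aₙ, vₙ)`,
so `vₙ` may be replaced by its projection `uₙ` onto the fixed space of `Aₙ`, which by the mean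
ergodic theorem is the limit of `1/p` times the translation part of `gₙ ^ p`. Finally
`(1, s u + t u')` is the blow-down along `s / p` of `(A, v) ^ p (B, w) ^ q`, where `A ^ p` and
`B ^ q` are close to the identity and `s q / p` close to `t`: return times near the identity
are syndetic by compactness of the orthogonal group.
-/

open Topology

section Recurrence

variable {V : Type*} [NormedAddCommGroup V]

theorem ContinuousLinearMap.exists_tendsto_birkhoffAverage [InnerProductSpace ℝ V]
    [CompleteSpace V] (f : V →L[ℝ] V) (hf : ‖f‖ ≤ 1) (v : V) :
    ∃ u, Tendsto (birkhoffAverage ℝ f id · v) atTop (𝓝 u) ∧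
      ∀ (s : ℝ) (d : V), f d = d → ‖s • u - d‖ ≤ ‖s • v - d‖ := by
  set K := f.eqLocus (1 : V →L[ℝ] V)
  refine ⟨_, f.tendsto_birkhoffAverage_orthogonalProjection hf v, fun s d hd => ?_⟩
  have hproj : s • (K.orthogonalProjectionOnto v : V) - d
      = K.orthogonalProjectionOnto (s • v - d) := by
    rw [ContinuousLinearMap.map_sub, ContinuousLinearMap.map_smul,
      K.orthogonalProjectionOnto_mem_subspace_eq_self ⟨d, hd⟩]
    rfl
  rw [hproj]
  exact K.norm_orthogonalProjectionOnto_apply_le _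

theorem LinearIsometryEquiv.exists_syndetic_pow_near_one [NormedSpace ℝ V]
    [FiniteDimensional ℝ V] (A : V ≃ₗᵢ[ℝ] V) {κ : ℝ} (hκ : 0 < κ) :
    ∃ N : ℕ, ∀ x : ℕ, ∃ q, x ≤ q ∧ q ≤ x + N ∧ ∀ y, ‖(A ^ q) y - y‖ ≤ κ * ‖y‖ := by
  let Φ : ℕ → V →L[ℝ] V := fun n => (A ^ n).toLinearIsometry.toContinuousLinearMap
  have hΦ : TotallyBounded (Set.range Φ) :=
    (isCompact_closedBall (0 : V →L[ℝ] V) 1).totallyBounded.subset <|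
      Set.range_subset_iff.2 fun n =>
        mem_closedBall_zero_iff.2 (A ^ n).toLinearIsometry.norm_toContinuousLinearMap_le
  obtain ⟨t, hts, htf, hcov⟩ := Metric.finite_approx_of_totallyBounded hΦ κ hκ
  choose! m hm using fun φ (hφ : φ ∈ t) => Set.mem_range.1 (hts hφ)
  obtain ⟨N, hN⟩ := (htf.image m).bddAbove
  refine ⟨N, fun x => ?_⟩
  obtain ⟨φ, hφt, hφ⟩ := Set.mem_iUnion₂.1 (hcov (Set.mem_range_self (x + N)))
  have hmN : m φ ≤ N := hN (Set.mem_image_of_mem m hφt)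
  refine ⟨x + N - m φ, by omega, by omega, fun y => ?_⟩
  have hsplit : A ^ (x + N) = A ^ m φ * A ^ (x + N - m φ) := by
    rw [← pow_add, Nat.add_sub_cancel' (by omega)]
  calc ‖(A ^ (x + N - m φ)) y - y‖
      = ‖(A ^ m φ) ((A ^ (x + N - m φ)) y - y)‖ := ((A ^ m φ).norm_map _).symm
    _ = ‖(Φ (x + N) - Φ (m φ)) y‖ := by simp [Φ, hsplit]
    _ ≤ ‖Φ (x + N) - Φ (m φ)‖ * ‖y‖ := ContinuousLinearMap.le_opNorm _ _
    _ ≤ κ * ‖y‖ := by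
        gcongr
        rw [← dist_eq_norm, hm φ hφt]
        exact (Metric.mem_ball.1 hφ).le

theorem LinearIsometryEquiv.exists_pow_near_one_with_ratio [NormedSpace ℝ V]
    [FiniteDimensional ℝ V] (A B : V ≃ₗᵢ[ℝ] V) {s t κ : ℝ} (hs : 0 < s) (ht : 0 < t)
    (hκ : 0 < κ) (X : ℕ) :
    ∃ p q : ℕ, X ≤ p ∧ X ≤ q ∧ (∀ y, ‖(A ^ p) y - y‖ ≤ κ * ‖y‖) ∧
      (∀ y, ‖(B ^ q) y - y‖ ≤ κ * ‖y‖) ∧ |s * q / p - t| ≤ κ := by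
  obtain ⟨M, hA⟩ := A.exists_syndetic_pow_near_one hκ
  obtain ⟨N, hB⟩ := B.exists_syndetic_pow_near_one hκ
  -- `p` is taken so large that `q ≥ X` and that a shift of `q` by `N + 1` moves `s q / p`
  -- by at most `κ`
  obtain ⟨p, hp, -, hAp⟩ := hA (X + ⌈X * s / t⌉₊ + ⌈s * ((N : ℝ) + 1) / κ⌉₊)
  obtain ⟨q, hq, hqN, hBq⟩ := hB ⌈p * t / s⌉₊
  have hpX : (X : ℝ) * s / t ≤ p :=
    (Nat.le_ceil _).trans (Nat.cast_le.2 (by omega))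
  have hpN : s * ((N : ℝ) + 1) / κ ≤ p :=
    (Nat.le_ceil _).trans (Nat.cast_le.2 (by omega))
  have hp0 : (0 : ℝ) < p := lt_of_lt_of_le (by positivity) hpN
  have hqlo : p * t / s ≤ q := (Nat.le_ceil _).trans (by exact_mod_cast hq)
  have hqhi : (q : ℝ) - 1 - N ≤ p * t / s := by
    have : (q : ℝ) ≤ ⌈p * t / s⌉₊ + N := by exact_mod_cast hqN
    linarith [Nat.ceil_lt_add_one (by positivity : (0 : ℝ) ≤ p * t / s)]
  refine ⟨p, q, hp.trans' (by omega), ?_, hAp, hBq, ?_⟩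
  · rw [div_le_iff₀ ht] at hpX
    have : (X : ℝ) ≤ q := ((le_div_iff₀ hs).2 (by linarith)).trans hqlo
    exact_mod_cast this
  · rw [div_le_iff₀ hs] at hqlo
    rw [le_div_iff₀ hs] at hqhi
    rw [div_le_iff₀ hκ] at hpN
    rw [abs_le, le_sub_iff_add_le, sub_le_iff_le_add, le_div_iff₀ hp0, div_le_iff₀ hp0]
    constructor <;> nlinarith

theorem tendsto_linearIsometryEquiv_apply [NormedSpace ℝ V] {ι : Type*} {l : Filter ι}
    {T : ι → V ≃ₗᵢ[ℝ] V} {κ : ι → ℝ} (hκ : Tendsto κ l (𝓝 0))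
    (hT : ∀ i y, ‖T i y - y‖ ≤ κ i * ‖y‖) {y : ι → V} {y₀ : V}
    (hy : Tendsto y l (𝓝 y₀)) : Tendsto (fun i => T i (y i)) l (𝓝 y₀) := by
  rw [tendsto_iff_norm_sub_tendsto_zero] at hy ⊢
  refine squeeze_zero (fun _ => norm_nonneg _) (fun i => ?_)
    (by simpa using hy.add (hκ.mul_const ‖y₀‖))
  calc ‖T i (y i) - y₀‖ ≤ ‖T i (y i) - T i y₀‖ + ‖T i y₀ - y₀‖ :=
        norm_sub_le_norm_sub_add_norm_sub _ _ _
    _ ≤ ‖y i - y₀‖ + κ i * ‖y₀‖ := by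
        rw [← map_sub, LinearIsometryEquiv.norm_map]
        exact add_le_add_right (hT i y₀) _

end Recurrence

theorem tendsto_apply_of_dense {ι X Y : Type*} [PseudoMetricSpace X] [PseudoMetricSpace Y]
    {l : Filter ι} {f : ι → X → Y} {g : X → Y} {s : Set X} (hs : Dense s)
    (hf : ∀ i, LipschitzWith 1 (f i)) (hg : LipschitzWith 1 g)
    (h : ∀ y ∈ s, Tendsto (f · y) l (𝓝 (g y))) (x : X) : Tendsto (f · x) l (𝓝 (g x)) := by
  refine Metric.tendsto_nhds.2 fun ε hε => ?_
  obtain ⟨y, hys, hxy⟩ := hs.exists_dist_lt x (by positivity : 0 < ε / 3)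
  filter_upwards [Metric.tendsto_nhds.1 (h y hys) (ε / 3) (by positivity)] with i hi
  calc dist (f i x) (g x) ≤ dist (f i x) (f i y) + dist (f i y) (g y) + dist (g y) (g x) :=
        dist_triangle4 _ _ _ _
    _ ≤ 1 * dist x y + dist (f i y) (g y) + 1 * dist y x := by
        gcongr
        · exact (hf i).dist_le_mul x y
        · exact hg.dist_le_mul y x
    _ < ε := by rw [dist_comm y x]; linarith

theorem LinearIsometryEquiv.coe_pow {R W : Type*} [Semiring R] [SeminormedAddCommGroup W]
    [Module R W] (A : W ≃ₗᵢ[R] W) (n : ℕ) : ⇑(A ^ n) = (⇑A)^[n] :=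
  hom_coe_pow _ rfl (fun _ _ => rfl) A n

section Affine
variable {k : ℕ}

@[simp] theorem aff_apply (A : E k ≃ₗᵢ[ℝ] E k) (v x : E k) : aff A v x = v + A x := rfl

theorem aff_mul (A B : E k ≃ₗᵢ[ℝ] E k) (v w : E k) :
    aff A v * aff B w = aff (A * B) (v + A w) := by
  ext x
  simp [add_assoc]

theorem aff_one_zero : aff (1 : E k ≃ₗᵢ[ℝ] E k) 0 = 1 := by
  ext x
  simp

theorem aff_inj {A B : E k ≃ₗᵢ[ℝ] E k} {v w : E k} : aff A v = aff B w ↔ A = B ∧ v = w := by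
  refine ⟨fun h => ?_, fun ⟨hA, hv⟩ => hA ▸ hv ▸ rfl⟩
  have hv : v = w := by simpa using congrArg (· 0) h
  subst hv
  exact ⟨LinearIsometryEquiv.ext fun x => by simpa using congrArg (· x) h, rfl⟩

theorem aff_pow (A : E k ≃ₗᵢ[ℝ] E k) (v : E k) (p : ℕ) :
    aff A v ^ p = aff (A ^ p) (birkhoffSum A id p v) := by
  induction p with
  | zero => simp [aff_one_zero]
  | succ p ih =>
    rw [pow_succ, ih, aff_mul, birkhoffSum_succ, ← pow_succ, LinearIsometryEquiv.coe_pow, id]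

theorem toRealLinearIsometryEquiv_aff (A : E k ≃ₗᵢ[ℝ] E k) (v : E k) :
    (aff A v).toRealLinearIsometryEquiv = A := by
  ext x
  simp [IsometryEquiv.toRealLinearIsometryEquiv_apply]

theorem aff_toRealLinearIsometryEquiv (g : E k ≃ᵢ E k) :
    aff g.toRealLinearIsometryEquiv (g 0) = g := by
  ext x
  simp [IsometryEquiv.toRealLinearIsometryEquiv_apply]

theorem exists_eq_aff (g : E k ≃ᵢ E k) : ∃ A v, g = aff A v :=
  ⟨_, _, (aff_toRealLinearIsometryEquiv g).symm⟩

end Affine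

section Topology
variable {k : ℕ}

theorem tendsto_nhds_isometryEquiv_iff {ι : Type*} {l : Filter ι} {f : ι → E k ≃ᵢ E k}
    {h : E k ≃ᵢ E k} : Tendsto f l (𝓝 h) ↔ ∀ x, Tendsto (f · x) l (𝓝 (h x)) := by
  rw [nhds_induced, tendsto_comap_iff, tendsto_pi_nhds]
  rfl

theorem continuous_isometryEquiv_iff {X : Type*} [TopologicalSpace X] {f : X → E k ≃ᵢ E k} :
    Continuous f ↔ ∀ x, Continuous (f · x) :=
  continuous_induced_rng.trans continuous_pi_iff

theorem continuous_isometryEquiv_apply (x : E k) : Continuous fun g : E k ≃ᵢ E k => g x :=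
  continuous_isometryEquiv_iff.1 continuous_id x

instance : IsTopologicalGroup (E k ≃ᵢ E k) where
  continuous_mul := continuous_isometryEquiv_iff.2 fun x => by
    refine continuous_iff_continuousAt.2 fun p => tendsto_iff_dist_tendsto_zero.2 ?_
    have hfst := tendsto_iff_dist_tendsto_zero.1
      (((continuous_isometryEquiv_apply (p.2 x)).comp continuous_fst).tendsto p)
    have hsnd := tendsto_iff_dist_tendsto_zero.1
      (((continuous_isometryEquiv_apply x).comp continuous_snd).tendsto p)
    refine squeeze_zero (fun _ => dist_nonneg) (fun q => ?_) (by simpa using hsnd.add hfst)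
    calc dist (q.1 (q.2 x)) (p.1 (p.2 x))
        ≤ dist (q.1 (q.2 x)) (q.1 (p.2 x)) + dist (q.1 (p.2 x)) (p.1 (p.2 x)) :=
          dist_triangle _ _ _
      _ = dist (q.2 x) (p.2 x) + dist (q.1 (p.2 x)) (p.1 (p.2 x)) := by
          rw [q.1.dist_eq]
  continuous_inv := continuous_isometryEquiv_iff.2 fun x => by
    refine continuous_iff_continuousAt.2 fun g => tendsto_iff_dist_tendsto_zero.2 ?_
    have hg := (continuous_isometryEquiv_apply (g⁻¹ x)).tendsto g
    refine (tendsto_iff_dist_tendsto_zero.1 hg).congr fun h => ?_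
    rw [← h⁻¹.dist_eq (h (g⁻¹ x)), dist_comm]
    simp [IsometryEquiv.inv_apply_self]

instance : T2Space (E k ≃ᵢ E k) :=
  T2Space.of_injective_continuous DFunLike.coe_injective continuous_induced_dom

theorem isInducing_apply_denseSeq :
    IsInducing fun (g : E k ≃ᵢ E k) (n : ℕ) => g (TopologicalSpace.denseSeq (E k) n) := by
  refine isInducing_iff_nhds.2 fun h => le_antisymm
    ((continuous_pi fun n => continuous_isometryEquiv_apply _).tendsto h).le_comap ?_
  refine tendsto_id'.1 (tendsto_nhds_isometryEquiv_iff.2 <|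
    tendsto_apply_of_dense (TopologicalSpace.denseRange_denseSeq (E k))
      (fun g => g.isometry.lipschitz) h.isometry.lipschitz ?_)
  rintro _ ⟨n, rfl⟩
  exact ((continuous_apply (A := fun _ : ℕ => E k) n).tendsto _).comp tendsto_comap

instance : FirstCountableTopology (E k ≃ᵢ E k) :=
  isInducing_apply_denseSeq.firstCountableTopology

end Topology

section Dilation
variable {k : ℕ}

/-- Conjugation `D_s ∘ g ∘ D_s⁻¹` by the dilation `D_s x = s • x`, extended to `s = 0` by
continuity, where it gives the linear part of `g`. -/
@[irreducible] noncomputable def dilConj (s : ℝ) : (E k ≃ᵢ E k) →* (E k ≃ᵢ E k) where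
  toFun g := aff g.toRealLinearIsometryEquiv (s • g 0)
  map_one' := by
    rw [← aff_one_zero, toRealLinearIsometryEquiv_aff]
    simp
  map_mul' g h := by
    obtain ⟨A, v, rfl⟩ := exists_eq_aff g
    obtain ⟨B, w, rfl⟩ := exists_eq_aff h
    simp [aff_mul, toRealLinearIsometryEquiv_aff, smul_add]

@[simp] theorem dilConj_aff (s : ℝ) (A : E k ≃ₗᵢ[ℝ] E k) (v : E k) :
    dilConj s (aff A v) = aff A (s • v) := by
  simp [dilConj, toRealLinearIsometryEquiv_aff]

theorem dilConj_apply (s : ℝ) (g : E k ≃ᵢ E k) (x : E k) :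
    dilConj s g x = s • g 0 + (g x - g 0) := by
  simp [dilConj, IsometryEquiv.toRealLinearIsometryEquiv_apply]

theorem continuous_dilConj : Continuous fun p : ℝ × (E k ≃ᵢ E k) => dilConj p.1 p.2 := by
  refine continuous_isometryEquiv_iff.2 fun x => ?_
  simp only [dilConj_apply]
  have h0 := (continuous_isometryEquiv_apply (0 : E k)).comp (continuous_snd (X := ℝ))
  have hx := (continuous_isometryEquiv_apply x).comp (continuous_snd (X := ℝ))
  exact (continuous_fst.smul h0).add (hx.sub h0)

theorem continuous_dilConj_right (s : ℝ) : Continuous (dilConj (k := k) s) :=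
  continuous_dilConj.comp (continuous_const.prodMk continuous_id)

theorem dilConj_zero_dilConj (s : ℝ) (g : E k ≃ᵢ E k) :
    dilConj 0 (dilConj s g) = dilConj 0 g := by
  obtain ⟨A, v, rfl⟩ := exists_eq_aff g
  simp

theorem dilConj_zero_of_apply_zero {g : E k ≃ᵢ E k} (hg : g 0 = 0) : dilConj 0 g = g := by
  ext x
  simp [dilConj_apply, hg]

theorem eq_aff_one_of_dilConj_zero_eq_one {g : E k ≃ᵢ E k} (hg : dilConj 0 g = 1) :
    g = aff 1 (g 0) := by
  obtain ⟨A, v, rfl⟩ := exists_eq_aff g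
  rw [dilConj_aff, zero_smul, ← aff_one_zero, aff_inj] at hg
  simp [hg.1]

end Dilation

section BlowDown

variable {k : ℕ} {G : Subgroup (E k ≃ᵢ E k)}

theorem mem_Ginf_iff {h : E k ≃ᵢ E k} :
    h ∈ Ginf G ↔ ∃ (s : ℕ → ℝ) (g : ℕ → E k ≃ᵢ E k), (∀ n, g n ∈ G) ∧ (∀ n, 0 < s n) ∧
      Tendsto s atTop (𝓝 0) ∧ Tendsto (fun n => dilConj (s n) (g n)) atTop (𝓝 h) := by
  constructor
  · rintro ⟨s, As, vs, hG, hs, hs0, hlim⟩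
    exact ⟨s, fun n => aff (As n) (vs n), hG, hs, hs0, by simpa using hlim⟩
  · rintro ⟨s, g, hG, hs, hs0, hlim⟩
    exact ⟨s, fun n => (g n).toRealLinearIsometryEquiv, fun n => g n 0,
      by simpa [aff_toRealLinearIsometryEquiv] using hG, hs, hs0,
      by simpa only [← dilConj_aff, aff_toRealLinearIsometryEquiv] using hlim⟩

theorem Ginf_eq_setOf_mapClusterPt :
    Ginf G = {h | MapClusterPt h (𝓝[>] 0 ×ˢ 𝓟 (G : Set (E k ≃ᵢ E k)))
      fun p => dilConj p.1 p.2} := by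
  ext h
  rw [mem_Ginf_iff]
  constructor
  · rintro ⟨s, g, hG, hs, hs0, hlim⟩
    refine MapClusterPt.of_comp (φ := fun n => (s n, g n)) ?_ hlim.mapClusterPt
    exact (tendsto_nhdsWithin_iff.2 ⟨hs0, .of_forall hs⟩).prodMk
      (tendsto_principal.2 (.of_forall hG))
  · intro hh
    obtain ⟨ψ, hψh, hψ⟩ := hh.exists_seq_tendsto
    obtain ⟨hψ₁, hψ₂⟩ := tendsto_prod_iff'.1 hψ
    obtain ⟨hψ₁0, hψ₁pos⟩ := tendsto_nhdsWithin_iff.1 hψ₁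
    obtain ⟨N, hN⟩ := eventually_atTop.1 (hψ₁pos.and (tendsto_principal.1 hψ₂))
    exact ⟨fun n => (ψ (n + N)).1, fun n => (ψ (n + N)).2, fun n => (hN _ (by omega)).2,
      fun n => (hN _ (by omega)).1, hψ₁0.comp (tendsto_add_atTop_nat N),
      hψh.comp (tendsto_add_atTop_nat N)⟩

theorem isClosed_Ginf : IsClosed (Ginf G) :=
  Ginf_eq_setOf_mapClusterPt (G := G) ▸ isClosed_setOfPred_clusterPt

theorem tendsto_dilConj_zero {s : ℕ → ℝ} (hs : Tendsto s atTop (𝓝 0)) (g : E k ≃ᵢ E k) :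
    Tendsto (fun n => dilConj (s n) g) atTop (𝓝 (dilConj 0 g)) := by
  have hsg : Tendsto (fun n => (s n, g)) atTop (𝓝 ((0 : ℝ), g)) :=
    hs.prodMk_nhds tendsto_const_nhds
  exact (continuous_dilConj.tendsto _).comp hsg

theorem dilConj_zero_mem_Ginf {g : E k ≃ᵢ E k} (hg : g ∈ G) : dilConj 0 g ∈ Ginf G :=
  mem_Ginf_iff.2 ⟨fun n => 1 / (n + 1), fun _ => g, fun _ => hg, fun _ => by positivity,
    tendsto_one_div_add_atTop_nhds_zero_nat,
    tendsto_dilConj_zero tendsto_one_div_add_atTop_nhds_zero_nat g⟩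

theorem inv_mem_Ginf {h : E k ≃ᵢ E k} (hh : h ∈ Ginf G) : h⁻¹ ∈ Ginf G := by
  obtain ⟨s, g, hG, hs, hs0, hlim⟩ := mem_Ginf_iff.1 hh
  exact mem_Ginf_iff.2 ⟨s, fun n => (g n)⁻¹, fun n => G.inv_mem (hG n), hs, hs0,
    by simpa only [map_inv] using hlim.inv⟩

theorem dilConj_zero_mem_closure_image {h : E k ≃ᵢ E k} (hh : h ∈ Ginf G) :
    dilConj 0 h ∈ closure (dilConj 0 '' (G : Set (E k ≃ᵢ E k))) := by
  obtain ⟨s, g, hG, -, -, hlim⟩ := mem_Ginf_iff.1 hh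
  refine mem_closure_of_tendsto (f := fun n => dilConj 0 (g n)) (b := atTop) ?_
    (.of_forall fun n => Set.mem_image_of_mem _ (hG n))
  simpa only [Function.comp_def, dilConj_zero_dilConj] using
    ((continuous_dilConj_right 0).tendsto h).comp hlim

theorem mul_dilConj_zero_mem_Ginf {x y : E k ≃ᵢ E k} (hx : x ∈ Ginf G) (hy : y ∈ Ginf G) :
    x * dilConj 0 y ∈ Ginf G := by
  refine isClosed_Ginf.closure_subset <| map_mem_closure (continuous_const_mul x)
    (dilConj_zero_mem_closure_image hy) ?_
  rintro _ ⟨b, hb, rfl⟩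
  obtain ⟨s, g, hG, hs, hs0, hlim⟩ := mem_Ginf_iff.1 hx
  exact mem_Ginf_iff.2 ⟨s, fun n => g n * b, fun n => G.mul_mem (hG n) hb, hs, hs0,
    by simpa only [map_mul] using hlim.mul (tendsto_dilConj_zero hs0 b)⟩

theorem dilConj_zero_mul_mem_Ginf {x y : E k ≃ᵢ E k} (hx : x ∈ Ginf G) (hy : y ∈ Ginf G) :
    dilConj 0 x * y ∈ Ginf G := by
  refine isClosed_Ginf.closure_subset <| map_mem_closure (f := (· * y)) (continuous_mul_const y)
    (dilConj_zero_mem_closure_image hx) ?_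
  rintro _ ⟨a, ha, rfl⟩
  obtain ⟨s, g, hG, hs, hs0, hlim⟩ := mem_Ginf_iff.1 hy
  exact mem_Ginf_iff.2 ⟨s, fun n => a * g n, fun n => G.mul_mem ha (hG n), hs, hs0,
    by simpa only [map_mul] using (tendsto_dilConj_zero hs0 a).mul hlim⟩

theorem aff_one_mem_Ginf_of_tendsto_birkhoffAverage {A B : E k ≃ₗᵢ[ℝ] E k} {v w u u' : E k}
    (ha : aff A v ∈ G) (hb : aff B w ∈ G)
    (hu : Tendsto (birkhoffAverage ℝ A id · v) atTop (𝓝 u))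
    (hu' : Tendsto (birkhoffAverage ℝ B id · w) atTop (𝓝 u')) {s t : ℝ} (hs : 0 < s)
    (ht : 0 < t) : aff 1 (s • u + t • u') ∈ Ginf G := by
  choose p q hp hq hAp hBq hpq using fun j : ℕ =>
    A.exists_pow_near_one_with_ratio B hs ht (κ := 1 / (j + 1)) (by positivity) (j + 1)
  have hκ : Tendsto (fun j : ℕ => 1 / ((j : ℝ) + 1)) atTop (𝓝 0) :=
    tendsto_one_div_add_atTop_nhds_zero_nat
  have hp_top : Tendsto p atTop atTop :=
    tendsto_atTop_mono (fun j => (Nat.le_succ j).trans (hp j)) tendsto_id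
  have hq_top : Tendsto q atTop atTop :=
    tendsto_atTop_mono (fun j => (Nat.le_succ j).trans (hq j)) tendsto_id
  have hp0 (j : ℕ) : (0 : ℝ) < p j := Nat.cast_pos.2 (by have := hp j; omega)
  have hq0 (j : ℕ) : (0 : ℝ) < q j := Nat.cast_pos.2 (by have := hq j; omega)
  have hratio : Tendsto (fun j => s * q j / p j) atTop (𝓝 t) :=
    tendsto_iff_norm_sub_tendsto_zero.2 (squeeze_zero (fun _ => norm_nonneg _) hpq hκ)
  -- `(aff A v) ^ p * (aff B w) ^ q`, blown down by `s / p`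
  refine ⟨fun j => s / p j, fun j => A ^ p j * B ^ q j,
    fun j => birkhoffSum A id (p j) v + (A ^ p j) (birkhoffSum B id (q j) w),
    fun j => ?_, fun j => div_pos hs (hp0 j), ?_, ?_⟩
  · rw [← aff_mul, ← aff_pow, ← aff_pow]
    exact G.mul_mem (G.pow_mem ha _) (G.pow_mem hb _)
  · simpa [div_eq_mul_inv] using
      (tendsto_natCast_atTop_atTop.comp hp_top).inv_tendsto_atTop.const_mul s
  · refine tendsto_nhds_isometryEquiv_iff.2 fun x => ?_
    have hlin : Tendsto (fun j => (A ^ p j * B ^ q j) x) atTop (𝓝 x) :=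
      tendsto_linearIsometryEquiv_apply hκ hAp
        (tendsto_linearIsometryEquiv_apply hκ hBq tendsto_const_nhds)
    have htrans : Tendsto (fun j => s • birkhoffAverage ℝ A id (p j) v +
        (s * q j / p j) • (A ^ p j) (birkhoffAverage ℝ B id (q j) w)) atTop
        (𝓝 (s • u + t • u')) :=
      ((hu.comp hp_top).const_smul s).add
        (hratio.smul (tendsto_linearIsometryEquiv_apply hκ hAp (hu'.comp hq_top)))
    convert htrans.add hlin using 2 with j
    · have := (hp0 j).ne'
      have := (hq0 j).ne'
      simp only [aff_apply, birkhoffAverage, map_smul, smul_add, smul_smul]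
      congr 3
      field_simp
    · simp

theorem commute_dilConj_zero_of_mem_Ginf (habel : ∀ a ∈ G, ∀ b ∈ G, a * b = b * a)
    {a y : E k ≃ᵢ E k} (ha : a ∈ G) (hy : y ∈ Ginf G) : Commute (dilConj 0 a) y := by
  obtain ⟨s, g, hG, -, hs0, hlim⟩ := mem_Ginf_iff.1 hy
  have ha' := tendsto_dilConj_zero hs0 a
  refine tendsto_nhds_unique (ha'.mul hlim) ((hlim.mul ha').congr fun n => ?_)
  rw [← map_mul, ← map_mul, habel _ ha _ (hG n)]

theorem apply_eq_of_aff_mem_of_aff_mem_Ginf (habel : ∀ a ∈ G, ∀ b ∈ G, a * b = b * a)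
    {A L : E k ≃ₗᵢ[ℝ] E k} {w d : E k} (ha : aff A w ∈ G) (hd : aff L d ∈ Ginf G) :
    A d = d := by
  have hcomm := commute_dilConj_zero_of_mem_Ginf habel ha hd
  rw [Commute, SemiconjBy, dilConj_aff, zero_smul, aff_mul, aff_mul, aff_inj] at hcomm
  simpa using hcomm.2

theorem exists_tendsto_smul_of_aff_one_mem_Ginf (habel : ∀ a ∈ G, ∀ b ∈ G, a * b = b * a)
    {d : E k} (hd : aff 1 d ∈ Ginf G) :
    ∃ (s : ℕ → ℝ) (A : ℕ → E k ≃ₗᵢ[ℝ] E k) (v u : ℕ → E k), (∀ n, aff (A n) (v n) ∈ G) ∧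
      (∀ n, 0 < s n) ∧ (∀ n, Tendsto (birkhoffAverage ℝ (A n) id · (v n)) atTop (𝓝 (u n))) ∧
      Tendsto (fun n => s n • u n) atTop (𝓝 d) := by
  obtain ⟨s, A, v, hG, hs, -, hlim⟩ := id hd
  have hsv : Tendsto (fun n => s n • v n) atTop (𝓝 d) := by
    simpa using tendsto_nhds_isometryEquiv_iff.1 hlim 0
  choose u hu hle using fun n => (A n).toLinearIsometry.toContinuousLinearMap
    |>.exists_tendsto_birkhoffAverage (A n).toLinearIsometry.norm_toContinuousLinearMap_le (v n)
  refine ⟨s, A, v, u, hG, hs, hu, tendsto_iff_norm_sub_tendsto_zero.2 ?_⟩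
  -- `d` is fixed by every `A n`, and projecting onto the fixed space brings `s n • v n` closer
  exact squeeze_zero (fun _ => norm_nonneg _)
    (fun n => hle n (s n) d (apply_eq_of_aff_mem_of_aff_mem_Ginf habel (hG n) hd))
    (tendsto_iff_norm_sub_tendsto_zero.1 hsv)

theorem aff_one_add_mem_Ginf (habel : ∀ a ∈ G, ∀ b ∈ G, a * b = b * a) {d₁ d₂ : E k}
    (h₁ : aff 1 d₁ ∈ Ginf G) (h₂ : aff 1 d₂ ∈ Ginf G) : aff 1 (d₁ + d₂) ∈ Ginf G := by
  obtain ⟨s, A, v, u, hG, hs, hu, hsu⟩ := exists_tendsto_smul_of_aff_one_mem_Ginf habel h₁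
  obtain ⟨t, B, w, u', hG', ht, hu', htu⟩ := exists_tendsto_smul_of_aff_one_mem_Ginf habel h₂
  have hlim : Tendsto (fun n : ℕ × ℕ => aff 1 (s n.1 • u n.1 + t n.2 • u' n.2))
      (atTop ×ˢ atTop) (𝓝 (aff 1 (d₁ + d₂))) :=
    tendsto_nhds_isometryEquiv_iff.2 fun x => by
      simpa using ((hsu.comp tendsto_fst).add (htu.comp tendsto_snd)).add_const x
  exact isClosed_Ginf.mem_of_tendsto hlim <| .of_forall fun n =>
    aff_one_mem_Ginf_of_tendsto_birkhoffAverage (hG n.1) (hG' n.2) (hu n.1) (hu' n.2)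
      (hs n.1) (ht n.2)

theorem mul_mem_Ginf_of_dilConj_zero_eq_one (habel : ∀ a ∈ G, ∀ b ∈ G, a * b = b * a)
    {g₁ g₂ : E k ≃ᵢ E k} (hg₁ : g₁ ∈ Ginf G) (hg₂ : g₂ ∈ Ginf G) (h₁ : dilConj 0 g₁ = 1)
    (h₂ : dilConj 0 g₂ = 1) : g₁ * g₂ ∈ Ginf G := by
  rw [eq_aff_one_of_dilConj_zero_eq_one h₁] at hg₁ ⊢
  rw [eq_aff_one_of_dilConj_zero_eq_one h₂] at hg₂ ⊢
  rw [aff_mul, one_mul]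
  simpa using aff_one_add_mem_Ginf habel hg₁ hg₂

theorem mul_mem_Ginf (habel : ∀ a ∈ G, ∀ b ∈ G, a * b = b * a) {x y : E k ≃ᵢ E k}
    (hx : x ∈ Ginf G) (hy : y ∈ Ginf G) : x * y ∈ Ginf G := by
  -- with `M = dilConj 0 a = dilConj 0 b`, `x * y = a * M⁻¹ * b = M * (M⁻¹ * a) * (M⁻¹ * b)`,
  -- and `M⁻¹ * a`, `M⁻¹ * b` are translations in `G_∞`
  set a := x * dilConj 0 y
  set b := dilConj 0 x * y
  have ha : a ∈ Ginf G := mul_dilConj_zero_mem_Ginf hx hy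
  have hb : b ∈ Ginf G := dilConj_zero_mul_mem_Ginf hx hy
  have hlin : dilConj 0 b = dilConj 0 a := by
    simp only [a, b, map_mul, dilConj_zero_dilConj]
  have htrans : dilConj 0 a⁻¹ * a * (dilConj 0 a⁻¹ * b) ∈ Ginf G := by
    refine mul_mem_Ginf_of_dilConj_zero_eq_one habel
      (dilConj_zero_mul_mem_Ginf (inv_mem_Ginf ha) ha)
      (dilConj_zero_mul_mem_Ginf (inv_mem_Ginf ha) hb) ?_ ?_ <;>
    simp [map_mul, map_inv, dilConj_zero_dilConj, hlin]
  have hxy : x * y = dilConj 0 a * (dilConj 0 a⁻¹ * a * (dilConj 0 a⁻¹ * b)) := by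
    simp only [a, b, map_mul, map_inv, dilConj_zero_dilConj]
    group
  rw [hxy]
  exact dilConj_zero_mul_mem_Ginf ha htrans

end BlowDown

theorem stmt14_general {k : ℕ} (G : Subgroup (E k ≃ᵢ E k))
    (habel : ∀ a ∈ G, ∀ b ∈ G, a * b = b * a) :
    (∃ Gi : Subgroup (E k ≃ᵢ E k), (Gi : Set (E k ≃ᵢ E k)) = Ginf G) ∧
    IsClosed (Ginf G) ∧
    {g : E k ≃ᵢ E k | g ∈ G ∧ g (0 : E k) = 0} ⊆ Ginf G ∧
    ((¬ ∀ (A : E k ≃ₗᵢ[ℝ] E k) (v : E k), aff A v ∈ G → aff A 0 ∈ G) →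
      {g : E k ≃ᵢ E k | g ∈ G ∧ g (0 : E k) = 0}
        ⊂ {g : E k ≃ᵢ E k | g ∈ Ginf G ∧ g (0 : E k) = 0}) := by
  have hiso : {g : E k ≃ᵢ E k | g ∈ G ∧ g 0 = 0} ⊆ Ginf G := fun g hg =>
    dilConj_zero_of_apply_zero hg.2 ▸ dilConj_zero_mem_Ginf hg.1
  refine ⟨⟨{ carrier := Ginf G
             mul_mem' := mul_mem_Ginf habel
             one_mem' := by simpa using dilConj_zero_mem_Ginf G.one_mem
             inv_mem' := inv_mem_Ginf }, rfl⟩, isClosed_Ginf, hiso, fun hP => ?_⟩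
  obtain ⟨A, v, hv, hA⟩ : ∃ A v, aff A v ∈ G ∧ aff A 0 ∉ G := by simpa using hP
  have hsub : {g : E k ≃ᵢ E k | g ∈ G ∧ g 0 = 0} ⊆ {g | g ∈ Ginf G ∧ g 0 = 0} :=
    fun g hg => ⟨hiso hg, hg.2⟩
  refine (Set.ssubset_iff_of_subset hsub).2 ⟨aff A 0, ⟨?_, by simp⟩, fun h => hA h.1⟩
  simpa using dilConj_zero_mem_Ginf hv

/-- for a closed abelian subgroup `G ≤ Isom(ℝ^k)`, the blow-down set
`G_∞` is a closed subgroup of `Isom(ℝ^k)` containing the isotropy group `Iso₀G`, and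
if `G` fails property (P) then `Iso₀G` is a proper subgroup of `Iso₀G_∞`. -/
theorem stmt14 {k : ℕ} (G : Subgroup (E k ≃ᵢ E k))
    (hclosed : IsClosed (G : Set (E k ≃ᵢ E k)))
    (hform : ∀ g ∈ G, ∃ (A : E k ≃ₗᵢ[ℝ] E k) (v : E k), g = aff A v)
    (habel : ∀ a ∈ G, ∀ b ∈ G, a * b = b * a) :
    (∃ Gi : Subgroup (E k ≃ᵢ E k), (Gi : Set (E k ≃ᵢ E k)) = Ginf G) ∧
    IsClosed (Ginf G) ∧
    {g : E k ≃ᵢ E k | g ∈ G ∧ g (0 : E k) = 0} ⊆ Ginf G ∧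
    ((¬ ∀ (A : E k ≃ₗᵢ[ℝ] E k) (v : E k), aff A v ∈ G → aff A 0 ∈ G) →
      {g : E k ≃ᵢ E k | g ∈ G ∧ g (0 : E k) = 0}
        ⊂ {g : E k ≃ᵢ E k | g ∈ Ginf G ∧ g (0 : E k) = 0}) :=
  stmt14_general G habel
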